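/- For each n ∈ ℕ there exists a decomposable NNF (DNNF) circuit of size 2^{O(n)} over the variables {x_{i,j} : 1 ≤ i < j ≤ n} whose set of satisfying assignments equals the set of models of lin_n. -/

import Mathlib

/-
An irreflexive total Boolean relation `≺` on `Fin n` is a linear order iff it is transitive, and a
tournament is transitive on a nonempty `S` iff some `i ∈ S` precedes every other element of `S` and
it is transitive on `S \ {i}`. Unfolding this recursion gives a circuit with an ∨-node for each
subset `S` (over the choices of `i`) and an ∧-node for each pair `(S, i)`, joining the literals
`i ≺ j` for `j ∈ S \ {i}` with the node for `S \ {i}`. The literals all mention `i`, which does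
not occur below `S \ {i}`, so the circuit is decomposable, and it has `O(n 2^n)` nodes.
-/

/-- Labels of nodes in an NNF circuit: Boolean constants, literals (a variable
with a polarity), conjunction, and disjunction. -/
inductive CLabel (V : Type*) where
  | const (b : Bool)
  | lit (v : V) (b : Bool)
  | and
  | or
deriving DecidableEq

/-- A Boolean circuit in negation normal form, given as a DAG: nodes are
`Fin size`, each node has a label and a list of children, and every edge goes
to a node with a strictly smaller index (this guarantees acyclicity).  The
node `root` is the (distinguished) root of the circuit. -/
structure Circuit (V : Type*) where
  size : ℕ
  label : Fin size → CLabel V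
  children : Fin size → List (Fin size)
  hwf : ∀ i : Fin size, ∀ j ∈ children i, (j : ℕ) < (i : ℕ)
  root : Fin size

namespace Circuit

variable {V : Type*}

/-- The truth value computed at node `i` of the circuit under assignment `α`. -/
def eval (C : Circuit V) (α : V → Bool) (i : Fin C.size) : Bool :=
  match C.label i with
  | .const b => b
  | .lit v b => α v == b
  | .and => (C.children i).attach.all (fun j => C.eval α j.1)
  | .or => (C.children i).attach.any (fun j => C.eval α j.1)
termination_by (i : ℕ)
decreasing_by all_goals exact C.hwf i j.1 j.2

variable [DecidableEq V]

/-- The set of variables occurring in the subcircuit rooted at node `i`. -/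
def vars (C : Circuit V) (i : Fin C.size) : Finset V :=
  match C.label i with
  | .const _ => ∅
  | .lit v _ => {v}
  | .and => ((C.children i).attach.map (fun j => C.vars j.1)).foldr (· ∪ ·) ∅
  | .or => ((C.children i).attach.map (fun j => C.vars j.1)).foldr (· ∪ ·) ∅
termination_by (i : ℕ)
decreasing_by all_goals exact C.hwf i j.1 j.2

/-- A circuit is decomposable (a DNNF circuit) if for every ∧-node the
variable sets of (the subcircuits rooted at) its children are pairwise
disjoint. -/
def Decomposable (C : Circuit V) : Prop :=
  ∀ i : Fin C.size, C.label i = .and →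
    (C.children i).Pairwise (fun j k => Disjoint (C.vars j) (C.vars k))

end Circuit

/-- A linear order on `Fin n`, encoded as a Boolean relation that is
irreflexive, transitive, and complete (total on distinct elements). -/
def IsLinOrder {n : ℕ} (r : Fin n → Fin n → Bool) : Prop :=
  (∀ a, r a a = false) ∧
  (∀ a b c, r a b = true → r b c = true → r a c = true) ∧
  (∀ a b, a ≠ b → r a b = true ∨ r b a = true)

/-- The variables `x_{i,j}` for `1 ≤ i < j ≤ n` of the function `lin_n`. -/
abbrev Vars (n : ℕ) := {p : Fin n × Fin n // p.1 < p.2}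

/-- An assignment `α` is a model of `lin_n` iff there is a linear order `r`
on `Fin n` with `α x_{i,j} = true ↔ i ≺ j` for all `i < j`. -/
def satLin (n : ℕ) (α : Vars n → Bool) : Prop :=
  ∃ r : Fin n → Fin n → Bool, IsLinOrder r ∧ ∀ p : Vars n, α p = r p.1.1 p.1.2

theorem exists_equiv_fin_lt_of_rank_lt {D β : Type*} [Fintype D] [LinearOrder β] (rank : D → β) :
    ∃ e : D ≃ Fin (Fintype.card D), ∀ a b, rank a < rank b → e a < e b := by
  let key : D → β ×ₗ Fin (Fintype.card D) := fun d => toLex (rank d, Fintype.equivFin D d)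
  have key_inj : key.Injective := fun a b h => (by simpa [key] using h : _ ∧ a = b).2
  let _ : LinearOrder D := LinearOrder.lift' key key_inj
  refine ⟨(Fintype.orderIsoFinOfCardEq D rfl).symm.toEquiv, fun a b hab => ?_⟩
  exact (Fintype.orderIsoFinOfCardEq D rfl).symm.strictMono (Prod.Lex.toLex_lt_toLex.2 (.inl hab))

theorem Finset.mem_foldr_union {α : Type*} [DecidableEq α] {l : List (Finset α)} {x : α} :
    x ∈ l.foldr (· ∪ ·) ∅ ↔ ∃ s ∈ l, x ∈ s := by
  induction l <;> simp_all

namespace Circuit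

variable {V : Type*} (C : Circuit V)

theorem eval_of_label_const {i : Fin C.size} {b : Bool} (h : C.label i = .const b)
    (α : V → Bool) : C.eval α i = b := by
  rw [eval, h]

theorem eval_of_label_lit {i : Fin C.size} {v : V} {b : Bool} (h : C.label i = .lit v b)
    (α : V → Bool) : C.eval α i = (α v == b) := by
  rw [eval, h]

theorem eval_eq_true_of_label_and {i : Fin C.size} (h : C.label i = .and) (α : V → Bool) :
    C.eval α i = true ↔ ∀ j ∈ C.children i, C.eval α j = true := by
  rw [eval, h]
  simp

theorem eval_eq_true_of_label_or {i : Fin C.size} (h : C.label i = .or) (α : V → Bool) :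
    C.eval α i = true ↔ ∃ j ∈ C.children i, C.eval α j = true := by
  rw [eval, h]
  simp

variable [DecidableEq V]

theorem vars_of_label_const {i : Fin C.size} {b : Bool} (h : C.label i = .const b) :
    C.vars i = ∅ := by
  rw [vars, h]

theorem vars_of_label_lit {i : Fin C.size} {v : V} {b : Bool} (h : C.label i = .lit v b) :
    C.vars i = {v} := by
  rw [vars, h]

theorem mem_vars_of_label_and {i : Fin C.size} (h : C.label i = .and) {x : V} :
    x ∈ C.vars i ↔ ∃ j ∈ C.children i, x ∈ C.vars j := by
  rw [vars, h]
  simp [Finset.mem_foldr_union]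

theorem mem_vars_of_label_or {i : Fin C.size} (h : C.label i = .or) {x : V} :
    x ∈ C.vars i ↔ ∃ j ∈ C.children i, x ∈ C.vars j := by
  rw [vars, h]
  simp [Finset.mem_foldr_union]

theorem vars_subset {A : Fin C.size → Set V}
    (hlit : ∀ i v b, C.label i = .lit v b → v ∈ A i)
    (hchildren : ∀ i, ∀ j ∈ C.children i, A j ⊆ A i) (i : Fin C.size) :
    ↑(C.vars i) ⊆ A i := by
  induction i using WellFoundedLT.induction with
  | _ i ih =>
  intro x hx
  cases hl : C.label i with
  | const b => simp [C.vars_of_label_const hl] at hx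
  | lit v b =>
    rw [C.vars_of_label_lit hl, Finset.coe_singleton, Set.mem_singleton_iff] at hx
    exact hx ▸ hlit i v b hl
  | and =>
    obtain ⟨j, hj, hxj⟩ := (C.mem_vars_of_label_and hl).1 hx
    exact hchildren i j hj (ih j (C.hwf i j hj) hxj)
  | or =>
    obtain ⟨j, hj, hxj⟩ := (C.mem_vars_of_label_or hl).1 hx
    exact hchildren i j hj (ih j (C.hwf i j hj) hxj)

end Circuit

section OfRanked

variable {V D β : Type*} [Fintype D] [LinearOrder β]

noncomputable def rankEquiv (rank : D → β) : D ≃ Fin (Fintype.card D) :=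
  (exists_equiv_fin_lt_of_rank_lt rank).choose

theorem rankEquiv_lt_rankEquiv {rank : D → β} {a b : D} (h : rank a < rank b) :
    rankEquiv rank a < rankEquiv rank b :=
  (exists_equiv_fin_lt_of_rank_lt rank).choose_spec a b h

/-- Numbering the nodes along a linear extension of `rank` makes every edge point to a smaller
index. -/
noncomputable def Circuit.ofRanked (label : D → CLabel V) (children : D → List D) (rank : D → β)
    (hrank : ∀ d, ∀ d' ∈ children d, rank d' < rank d) (root : D) : Circuit V where
  size := Fintype.card D
  label k := label ((rankEquiv rank).symm k)
  children k := (children ((rankEquiv rank).symm k)).map (rankEquiv rank)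
  hwf k j hj := by
    obtain ⟨d', hd', rfl⟩ := List.mem_map.1 hj
    simpa using rankEquiv_lt_rankEquiv (hrank _ d' hd')
  root := rankEquiv rank root

namespace Circuit.ofRanked

variable {label : D → CLabel V} {children : D → List D} {rank : D → β}
  {hrank : ∀ d, ∀ d' ∈ children d, rank d' < rank d} {root : D}

theorem label_rankEquiv (d : D) :
    (ofRanked label children rank hrank root).label (rankEquiv rank d) = label d := by
  simp [ofRanked]

theorem children_rankEquiv (d : D) :
    (ofRanked label children rank hrank root).children (rankEquiv rank d) =
      (children d).map (rankEquiv rank) := by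
  simp [ofRanked]

variable [DecidableEq V]

theorem vars_subset {A : D → Set V} (hlit : ∀ d v b, label d = .lit v b → v ∈ A d)
    (hchildren : ∀ d, ∀ d' ∈ children d, A d' ⊆ A d) (d : D) :
    ↑((ofRanked label children rank hrank root).vars (rankEquiv rank d)) ⊆ A d := by
  simpa using Circuit.vars_subset (ofRanked label children rank hrank root)
    (A := fun k => A ((rankEquiv rank).symm k)) (fun k v b h => hlit _ v b h)
    (fun k j hj => by
      obtain ⟨d', hd', rfl⟩ := List.mem_map.1 hj
      simpa using hchildren _ d' hd') (rankEquiv rank d)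

theorem decomposable
    (h : ∀ d, label d = .and → (children d).Pairwise fun a b =>
      Disjoint ((ofRanked label children rank hrank root).vars (rankEquiv rank a))
        ((ofRanked label children rank hrank root).vars (rankEquiv rank b))) :
    (ofRanked label children rank hrank root).Decomposable := by
  intro k hk
  obtain ⟨d, rfl⟩ := (rankEquiv rank).surjective k
  rw [label_rankEquiv] at hk
  rw [children_rankEquiv]
  exact List.pairwise_map.2 (h d hk)

end Circuit.ofRanked

end OfRanked

section TransOn

variable {α : Type*} (R : α → α → Prop)

def TransOn (S : Finset α) : Prop :=
  ∀ a ∈ S, ∀ b ∈ S, ∀ c ∈ S, R a b → R b c → R a c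

variable {R}

theorem TransOn.mono {S T : Finset α} (hT : TransOn R T) (h : S ⊆ T) : TransOn R S :=
  fun a ha b hb c hc => hT a (h ha) b (h hb) c (h hc)

theorem TransOn.exists_forall_rel {S : Finset α} (hS : TransOn R S) (hne : S.Nonempty)
    (hirrefl : ∀ a, ¬ R a a) (htotal : ∀ a b, a ≠ b → R a b ∨ R b a) :
    ∃ i ∈ S, ∀ j ∈ S, j ≠ i → R i j := by
  let _ : IsTrans S (fun a b => R a b) := ⟨fun a b c => hS a a.2 b b.2 c c.2⟩
  let _ : Std.Irrefl (fun a b : S => R a b) := ⟨fun a => hirrefl a⟩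
  obtain ⟨m, -, hm⟩ := (Finite.wellFounded_of_trans_of_irrefl (fun a b : S => R a b)).has_min
    Set.univ ⟨⟨_, hne.choose_spec⟩, trivial⟩
  refine ⟨m, m.2, fun j hj hjm => (htotal m j (Ne.symm hjm)).resolve_right fun hjm' => ?_⟩
  exact hm ⟨j, hj⟩ trivial hjm'

variable [DecidableEq α]

theorem transOn_iff_exists_erase (hasymm : ∀ a b, R a b → ¬ R b a)
    (htotal : ∀ a b, a ≠ b → R a b ∨ R b a) {S : Finset α} (hne : S.Nonempty) :
    TransOn R S ↔ ∃ i ∈ S, (∀ j ∈ S.erase i, R i j) ∧ TransOn R (S.erase i) := by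
  constructor
  · intro hS
    obtain ⟨i, hi, hmin⟩ := hS.exists_forall_rel hne (fun a h => hasymm a a h h) htotal
    exact ⟨i, hi, fun j hj => hmin j (Finset.mem_of_mem_erase hj) (Finset.ne_of_mem_erase hj),
      hS.mono (Finset.erase_subset i S)⟩
  · rintro ⟨i, -, hmin, hrest⟩ a ha b hb c hc hab hbc
    have hmin' : ∀ x ∈ S, x ≠ i → R i x := fun x hx hxi => hmin x (Finset.mem_erase.2 ⟨hxi, hx⟩)
    by_cases hai : a = i
    · subst hai
      by_cases hca : c = a
      · exact absurd (hca ▸ hbc) (hasymm a b hab)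
      · exact hmin' c hc hca
    have hbi : b ≠ i := by rintro rfl; exact hasymm a b hab (hmin' a ha hai)
    have hci : c ≠ i := by rintro rfl; exact hasymm b c hbc (hmin' b hb hbi)
    exact hrest a (Finset.mem_erase.2 ⟨hai, ha⟩) b (Finset.mem_erase.2 ⟨hbi, hb⟩) c
      (Finset.mem_erase.2 ⟨hci, hc⟩) hab hbc

end TransOn

namespace LinCircuit

open Finset

variable {n : ℕ}

/-- `ordered S` computes "`≺` is transitive on `S`"; `head S i` computes "`i` precedes the rest
of `S` and `≺` is transitive on `S \ {i}`"; `lit i j` is the literal for `i ≺ j`. -/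
inductive Node (n : ℕ) where
  | lit (i j : Fin n)
  | head (S : Finset (Fin n)) (i : Fin n)
  | ordered (S : Finset (Fin n))

namespace Node

def equivSum : Node n ≃ (Fin n × Fin n) ⊕ (Finset (Fin n) × Fin n) ⊕ Finset (Fin n) where
  toFun
    | lit i j => .inl (i, j)
    | head S i => .inr (.inl (S, i))
    | ordered S => .inr (.inr S)
  invFun
    | .inl (i, j) => lit i j
    | .inr (.inl (S, i)) => head S i
    | .inr (.inr S) => ordered S
  left_inv d := by cases d <;> rfl
  right_inv x := by rcases x with ⟨i, j⟩ | ⟨S, i⟩ | S <;> rfl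

instance : Fintype (Node n) := Fintype.ofEquiv _ equivSum.symm

theorem card_eq : Fintype.card (Node n) = n * n + (2 ^ n * n + 2 ^ n) := by
  simp [Fintype.card_congr equivSum]

def label : Node n → CLabel (Vars n)
  | lit i j =>
    if h : i < j then .lit ⟨(i, j), h⟩ true
    else if h : j < i then .lit ⟨(j, i), h⟩ false
    else .const false
  | head _ _ => .and
  | ordered S => if S = ∅ then .const true else .or

noncomputable def children : Node n → List (Node n)
  | lit _ _ => []
  | head S i => (S.erase i).toList.map (lit i) ++ [ordered (S.erase i)]
  | ordered S => S.toList.map (head S)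

/-- `head S i` is ranked by `S.erase i`, so that its rank exceeds that of its child also when
`i ∉ S`. -/
def rank : Node n → ℕ
  | lit _ _ => 0
  | head S i => 2 * #(S.erase i) + 1
  | ordered S => 2 * #S

theorem rank_lt_of_mem_children : ∀ d : Node n, ∀ d' ∈ d.children, d'.rank < d.rank
  | lit _ _, _, h => by simp [children] at h
  | head S i, _, h => by
    simp only [children, List.mem_append, List.mem_map, mem_toList, List.mem_singleton] at h
    rcases h with ⟨j, -, rfl⟩ | rfl <;> simp [rank]
  | ordered S, _, h => by
    simp only [children, List.mem_map, mem_toList] at h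
    obtain ⟨i, hi, rfl⟩ := h
    have := card_erase_add_one hi
    simp only [rank]
    omega

/-- Every variable occurring below the node has both endpoints in `scope`. -/
def scope : Node n → Finset (Fin n)
  | lit i j => {i, j}
  | head S i => insert i S
  | ordered S => S

theorem scope_subset_of_mem_children : ∀ {d d' : Node n}, d' ∈ d.children → d'.scope ⊆ d.scope
  | lit _ _, _, h => by simp [children] at h
  | head S i, _, h => by
    simp only [children, List.mem_append, List.mem_map, mem_toList, List.mem_singleton] at h
    rcases h with ⟨j, hj, rfl⟩ | rfl
    · simp [scope, insert_subset_iff, mem_of_mem_erase hj]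
    · exact (erase_subset i S).trans (subset_insert i S)
  | ordered S, _, h => by
    simp only [children, List.mem_map, mem_toList] at h
    obtain ⟨i, hi, rfl⟩ := h
    simp [scope, hi]

theorem mem_scope_of_label_eq_lit : ∀ {d : Node n} {v : Vars n} {b : Bool}, d.label = .lit v b →
    v.1.1 ∈ d.scope ∧ v.1.2 ∈ d.scope
  | lit i j, v, b, h => by
    simp only [label] at h
    split_ifs at h <;> cases h <;> simp [scope]
  | head _ _, _, _, h => by simp [label] at h
  | ordered S, _, _, h => by
    simp only [label] at h
    split_ifs at h

end Node

noncomputable def circuit (n : ℕ) : Circuit (Vars n) :=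
  .ofRanked Node.label Node.children Node.rank Node.rank_lt_of_mem_children (.ordered univ)

noncomputable abbrev node (d : Node n) : Fin (circuit n).size := rankEquiv Node.rank d

theorem label_node (d : Node n) : (circuit n).label (node d) = d.label :=
  Circuit.ofRanked.label_rankEquiv d

theorem children_node (d : Node n) : (circuit n).children (node d) = d.children.map node :=
  Circuit.ofRanked.children_rankEquiv d

def before (α : Vars n → Bool) (i j : Fin n) : Bool :=
  if h : i < j then α ⟨(i, j), h⟩ else if h : j < i then !α ⟨(j, i), h⟩ else false

variable (α : Vars n → Bool)

theorem before_self (i : Fin n) : before α i i = false := by simp [before]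

theorem before_asymm {i j : Fin n} (h : before α i j = true) : before α j i = false := by
  rcases lt_trichotomy i j with hij | rfl | hji
  · simp_all [before, hij.not_gt]
  · exact before_self α i
  · simp_all [before, hji.not_gt]

theorem before_total {i j : Fin n} (h : i ≠ j) : before α i j = true ∨ before α j i = true := by
  rcases h.lt_or_gt with hij | hji
  · cases hα : α ⟨(i, j), hij⟩ <;> simp [before, hij, hij.not_gt, hα]
  · cases hα : α ⟨(j, i), hji⟩ <;> simp [before, hji, hji.not_gt, hα]

theorem eval_node_lit (i j : Fin n) : (circuit n).eval α (node (.lit i j)) = before α i j := by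
  rcases lt_trichotomy i j with hij | rfl | hji
  · rw [Circuit.eval_of_label_lit _ (by rw [label_node, Node.label, dif_pos hij])]
    simp [before, hij]
  · rw [Circuit.eval_of_label_const _ (by rw [label_node, Node.label, dif_neg (lt_irrefl i),
      dif_neg (lt_irrefl i)]), before_self]
  · rw [Circuit.eval_of_label_lit _ (by rw [label_node, Node.label, dif_neg hji.not_gt,
      dif_pos hji])]
    simp [before, hji, hji.not_gt]

theorem eval_node_head (S : Finset (Fin n)) (i : Fin n) :
    (circuit n).eval α (node (.head S i)) = true ↔
      (∀ j ∈ S.erase i, before α i j = true) ∧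
        (circuit n).eval α (node (.ordered (S.erase i))) = true := by
  rw [Circuit.eval_eq_true_of_label_and _ (label_node _), children_node]
  simp only [Node.children, List.map_append, List.map_map, List.forall_mem_append,
    List.forall_mem_map, List.map_cons, List.map_nil, List.forall_mem_singleton, mem_toList,
    Function.comp_apply, eval_node_lit]

theorem eval_node_ordered (S : Finset (Fin n)) :
    (circuit n).eval α (node (.ordered S)) = true ↔ TransOn (before α · · = true) S := by
  induction S using Finset.strongInduction with
  | _ S ih =>
  rcases S.eq_empty_or_nonempty with rfl | hne
  · rw [Circuit.eval_of_label_const _ (by rw [label_node, Node.label, if_pos rfl])]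
    simp [TransOn]
  · rw [Circuit.eval_eq_true_of_label_or _ (by rw [label_node, Node.label, if_neg hne.ne_empty]),
      transOn_iff_exists_erase (fun a b h => by simp [before_asymm α h])
        (fun a b h => before_total α h) hne, children_node]
    simp only [Node.children, List.map_map, List.mem_map, mem_toList, Function.comp_apply,
      exists_exists_and_eq_and, eval_node_head]
    exact exists_congr fun i => and_congr_right fun hi => and_congr_right' (ih _ (erase_ssubset hi))

theorem before_eq_of_isLinOrder {r : Fin n → Fin n → Bool} (hr : IsLinOrder r)
    (hα : ∀ p, α p = r p.1.1 p.1.2) : before α = r := by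
  obtain ⟨hirr, htrans, htotal⟩ := hr
  funext a b
  rcases lt_trichotomy a b with hab | rfl | hba
  · simp [before, hab, hα]
  · rw [before_self, hirr]
  · have hnot : ¬ (r a b = true ∧ r b a = true) := fun h => by
      simpa [hirr] using htrans a b a h.1 h.2
    have htotal_ab := htotal a b hba.ne'
    cases hr₁ : r a b <;> cases hr₂ : r b a <;> simp_all [before, hba.not_gt]

theorem transOn_before_univ_iff : TransOn (before α · · = true) univ ↔ satLin n α := by
  constructor
  · intro h
    refine ⟨before α, ⟨before_self α, fun a b c => h a (mem_univ a) b (mem_univ b) c (mem_univ c),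
      fun a b => before_total α⟩, fun p => by simp [before, p.2]⟩
  · rintro ⟨r, hr, hα⟩
    rw [before_eq_of_isLinOrder α hr hα]
    exact fun a _ b _ c _ => hr.2.1 a b c

theorem vars_node_subset_scope (d : Node n) :
    ↑((circuit n).vars (node d)) ⊆ {x : Vars n | x.1.1 ∈ d.scope ∧ x.1.2 ∈ d.scope} :=
  Circuit.ofRanked.vars_subset (fun _ _ _ => Node.mem_scope_of_label_eq_lit)
    (fun _ _ hd' _ hx => ⟨Node.scope_subset_of_mem_children hd' hx.1,
      Node.scope_subset_of_mem_children hd' hx.2⟩) d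

theorem disjoint_vars_node {d d' : Node n} (k : Fin n) (h : d.scope ∩ d'.scope ⊆ {k}) :
    Disjoint ((circuit n).vars (node d)) ((circuit n).vars (node d')) := by
  refine Finset.disjoint_left.2 fun x hx hx' => x.2.ne ?_
  have h₁ := vars_node_subset_scope d hx
  have h₂ := vars_node_subset_scope d' hx'
  exact (mem_singleton.1 (h (mem_inter.2 ⟨h₁.1, h₂.1⟩))).trans
    (mem_singleton.1 (h (mem_inter.2 ⟨h₁.2, h₂.2⟩))).symm

theorem decomposable (n : ℕ) : (circuit n).Decomposable := by
  refine Circuit.ofRanked.decomposable ?_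
  rintro (_ | ⟨S, i⟩ | S) hd
  · simp only [Node.label] at hd
    split_ifs at hd
  · simp only [Node.children, List.pairwise_append, List.pairwise_map, List.pairwise_singleton,
      List.mem_map, List.mem_singleton, true_and]
    refine ⟨(nodup_toList _).imp fun hjj' => disjoint_vars_node i ?_, ?_⟩
    · intro x; simp only [Node.scope, mem_inter, mem_insert, mem_singleton]; grind
    · rintro _ ⟨j, -, rfl⟩ _ rfl
      refine disjoint_vars_node j ?_
      intro x; simp only [Node.scope, mem_inter, mem_insert, mem_singleton, mem_erase]; tauto
  · simp only [Node.label] at hd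
    split_ifs at hd

theorem eval_root_iff : (circuit n).eval α (circuit n).root = true ↔ satLin n α :=
  (eval_node_ordered α univ).trans (transOn_before_univ_iff α)

theorem size_le (n : ℕ) : (circuit n).size ≤ 2 * 2 ^ (2 * n) := by
  have hn : n < 2 ^ n := n.lt_two_pow_self
  calc (circuit n).size = n * n + 2 ^ n * (n + 1) := by rw [mul_add_one]; exact Node.card_eq
    _ ≤ 2 ^ n * 2 ^ n + 2 ^ n * 2 ^ n := by gcongr; omega
    _ = 2 * 2 ^ (2 * n) := by ring

end LinCircuit

/-- there is a constant `c` such that for each `n` there is a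
DNNF circuit with at most `c · 2^{c·n}` nodes (i.e. of size `2^{O(n)}`) over
the variables `x_{i,j}` (`i < j`) whose satisfying assignments are exactly the
models of `lin_n`. -/
theorem dnnf_for_lin_exponential_size :
    ∃ c : ℕ, 0 < c ∧ ∀ n : ℕ, ∃ C : Circuit (Vars n),
      C.Decomposable ∧
      (∀ α : Vars n → Bool, C.eval α C.root = true ↔ satLin n α) ∧
      C.size ≤ c * 2 ^ (c * n) :=
  ⟨2, two_pos, fun n => ⟨LinCircuit.circuit n, LinCircuit.decomposable n,
    LinCircuit.eval_root_iff, LinCircuit.size_le n⟩⟩
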